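/- For every nonempty graph G and every integer t ≥ 1, r̂(tK₂, G) ≥ (t−1)·Δ(G) + |E(G)|, where Δ(G) is the maximum degree of G. -/

import Mathlib

open SimpleGraph Filter Topology

/-- `F` contains an (injective) copy of `G`. -/
def Contains {V W : Type*} (F : SimpleGraph V) (G : SimpleGraph W) : Prop :=
  ∃ f : G →g F, Function.Injective f

/-- `F → (G, H)`: every red-blue coloring of the edges of `F` (given by the red
subgraph `R ≤ F`, the blue edges being those of `F \ R`) contains a red copy of `G`
or a blue copy of `H`. -/
def Arrows {VF VG VH : Type*} (F : SimpleGraph VF) (G : SimpleGraph VG)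
    (H : SimpleGraph VH) : Prop :=
  ∀ R : SimpleGraph VF, R ≤ F → Contains R G ∨ Contains (F \ R) H

/-- The size Ramsey number `r̂(G, H)`: minimum number of edges of a (finite) graph `F`
with `F → (G, H)`. -/
noncomputable def sizeRamsey {VG VH : Type*} (G : SimpleGraph VG) (H : SimpleGraph VH) : ℕ :=
  sInf {m : ℕ | ∃ (n : ℕ) (F : SimpleGraph (Fin n)), Arrows F G H ∧ F.edgeSet.ncard = m}

/-- The matching `tK₂` with `t` edges. -/
def MatchingGraph (t : ℕ) : SimpleGraph (Fin t × Fin 2) where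
  Adj x y := x.1 = y.1 ∧ x.2 ≠ y.2
  symm := ⟨fun _ _ h => ⟨h.1.symm, h.2.symm⟩⟩
  loopless := ⟨fun _ h => h.2 rfl⟩

/-- `r̂_∞(G) = inf_{t ≥ 1} r̂(tK₂, G) / (t |E(G)|)`. -/
noncomputable def rhatInf {V : Type*} (G : SimpleGraph V) : ℝ :=
  ⨅ t : ℕ+, (sizeRamsey (MatchingGraph t) G : ℝ) / (t * G.edgeSet.ncard)

/-- The matching number `ν(G)`. -/
noncomputable def matchingNumber {V : Type*} (G : SimpleGraph V) : ℕ :=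
  sSup {m : ℕ | Contains G (MatchingGraph m)}

/-- The isolate-free core of `G`: delete all isolated vertices. -/
def core {V : Type*} (G : SimpleGraph V) : SimpleGraph {v : V // ∃ w, G.Adj v w} :=
  G.induce {v : V | ∃ w, G.Adj v w}

section Aux
variable {V W : Type*}

private lemma contains_mono {A B : SimpleGraph W} {G : SimpleGraph V}
    (h : A ≤ B) (hc : Contains A G) : Contains B G := by
  obtain ⟨f, hf⟩ := hc
  exact ⟨(SimpleGraph.Hom.ofLE h).comp f, Function.injective_id.comp hf⟩

private lemma contains_G_of_arrows {n t : ℕ} {F : SimpleGraph (Fin n)} {G : SimpleGraph V}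
    (h : Arrows F (MatchingGraph (t + 1)) G) : Contains F G := by
  rcases h ⊥ bot_le with ⟨f, -⟩ | hc
  · have hadj : (MatchingGraph (t+1)).Adj ((0 : Fin (t+1)), (0 : Fin 2)) ((0 : Fin (t+1)), (1 : Fin 2)) :=
      by show _ ∧ _; exact ⟨rfl, by simp⟩
    exact absurd (f.map_adj hadj) (by simp)
  · exact contains_mono sdiff_le hc

private lemma ncard_le_of_contains [Fintype W] {F : SimpleGraph W} {G : SimpleGraph V}
    (hc : Contains F G) : G.edgeSet.ncard ≤ F.edgeSet.ncard := by
  obtain ⟨f, hf⟩ := hc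
  have h2 := Nat.card_le_card_of_injective _ (SimpleGraph.Hom.mapEdgeSet.injective f hf)
  rwa [Nat.card_coe_set_eq, Nat.card_coe_set_eq] at h2

private lemma maxDegree_le_of_contains [Fintype V] [Fintype W] {F : SimpleGraph W}
    {G : SimpleGraph V} [DecidableRel G.Adj] [DecidableRel F.Adj] [Nonempty V]
    (hc : Contains F G) : G.maxDegree ≤ F.maxDegree := by
  obtain ⟨f, hf⟩ := hc
  obtain ⟨v, hv⟩ := G.exists_maximal_degree_vertex
  rw [hv]
  calc G.degree v ≤ F.degree (f v) := by
        rw [← SimpleGraph.card_neighborFinset_eq_degree,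
          ← SimpleGraph.card_neighborFinset_eq_degree]
        apply Finset.card_le_card_of_injOn f
        · intro w hw
          simp only [Finset.mem_coe, SimpleGraph.mem_neighborFinset] at *
          exact f.map_adj hw
        · exact hf.injOn
    _ ≤ F.maxDegree := F.degree_le_maxDegree _

end Aux

section Aux2
variable {V W : Type*}

private lemma arrows_delete {n t : ℕ} {F : SimpleGraph (Fin n)} {G : SimpleGraph V}
    (h : Arrows F (MatchingGraph (t + 1)) G) (v : Fin n) :
    Arrows (F.deleteEdges (F.incidenceSet v)) (MatchingGraph t) G := by
  classical
  intro R hR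
  set F' := F.deleteEdges (F.incidenceSet v) with hF'
  have hR' : R ⊔ (F \ F') ≤ F := sup_le (hR.trans (F.deleteEdges_le _)) sdiff_le
  have hvadj : ∀ x y : Fin n, (R ⊔ (F \ F')).Adj x y → x ≠ v → y ≠ v → R.Adj x y := by
    intro x y hxy hx hy
    rcases hxy with h1 | h2
    · exact h1
    · exfalso
      obtain ⟨hF, hnF'⟩ := h2
      apply hnF'
      rw [hF', SimpleGraph.deleteEdges_adj]
      refine ⟨hF, fun hmem => ?_⟩
      rcases ((SimpleGraph.mk'_mem_incidenceSet_iff F).mp hmem).2 with h | h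
      · exact hx h.symm
      · exact hy h.symm
  rcases h (R ⊔ (F \ F')) hR' with ⟨f, hf⟩ | hc
  · left
    obtain ⟨i₀, hkey⟩ : ∃ i₀ : Fin (t+1), ∀ p : Fin (t+1) × Fin 2, p.1 ≠ i₀ → f p ≠ v := by
      by_cases hex : ∃ p : Fin (t+1) × Fin 2, f p = v
      · obtain ⟨p₀, hp₀⟩ := hex
        exact ⟨p₀.1, fun p hp hfp => hp (congrArg Prod.fst (hf (hfp.trans hp₀.symm)))⟩
      · exact ⟨0, fun p _ hfp => hex ⟨p, hfp⟩⟩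
    refine ⟨⟨fun p => f (i₀.succAbove p.1, p.2), ?_⟩, ?_⟩
    · rintro ⟨a, k⟩ ⟨b, l⟩ (⟨h1, h2⟩ : _ ∧ _)
      dsimp only at h1 h2 ⊢
      subst h1
      have hadj : (R ⊔ (F \ F')).Adj (f (i₀.succAbove a, k)) (f (i₀.succAbove a, l)) :=
        f.map_adj ⟨rfl, h2⟩
      exact hvadj _ _ hadj (hkey _ (Fin.succAbove_ne i₀ a)) (hkey _ (Fin.succAbove_ne i₀ a))
    · rintro ⟨a, k⟩ ⟨b, l⟩ hab
      have h1 := hf hab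
      rw [Prod.mk.injEq] at h1
      exact Prod.ext (Fin.succAbove_right_injective h1.1) h1.2
  · right
    refine contains_mono ?_ hc
    intro x y hxy
    simp only [sdiff_adj, sup_adj, not_or] at hxy
    obtain ⟨hFxy, hnR, hnd⟩ := hxy
    have hF'xy : F'.Adj x y := by
      by_contra hcon
      exact hnd ⟨hFxy, hcon⟩
    exact ⟨hF'xy, hnR⟩

private lemma main_bound [Fintype V] (G : SimpleGraph V) [DecidableRel G.Adj]
    (hG : G.edgeSet.Nonempty) :
    ∀ (t n : ℕ) (F : SimpleGraph (Fin n)), Arrows F (MatchingGraph (t + 1)) G →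
      t * G.maxDegree + G.edgeSet.ncard ≤ F.edgeSet.ncard := by
  have hV : Nonempty V := by
    obtain ⟨e, he⟩ := hG
    induction e using Sym2.ind with | _ x y => exact ⟨x⟩
  intro t
  induction t with
  | zero =>
    intro n F h
    simpa using ncard_le_of_contains (contains_G_of_arrows h)
  | succ t ih =>
    intro n F h
    classical
    have hFG := contains_G_of_arrows h
    haveI : Nonempty V := hV
    haveI hFne : Nonempty (Fin n) := ⟨hFG.choose hV.some⟩
    obtain ⟨v, hv⟩ := F.exists_maximal_degree_vertex
    have hdeg : G.maxDegree ≤ F.degree v := hv ▸ maxDegree_le_of_contains hFG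
    have hIH := ih n (F.deleteEdges (F.incidenceSet v)) (arrows_delete h v)
    have hsub : F.incidenceSet v ⊆ F.edgeSet := F.incidenceSet_subset v
    have hcard : (F.incidenceSet v).ncard = F.degree v := by
      rw [Set.ncard_eq_toFinset_card', Set.toFinset_card]
      exact F.card_incidenceSet_eq_degree v
    have hsplit : (F.deleteEdges (F.incidenceSet v)).edgeSet.ncard + (F.incidenceSet v).ncard
        = F.edgeSet.ncard := by
      rw [SimpleGraph.edgeSet_deleteEdges]
      rw [Set.ncard_diff hsub, Nat.sub_add_cancel (Set.ncard_le_ncard hsub (Set.toFinite _))]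
    calc (t + 1) * G.maxDegree + G.edgeSet.ncard
        = (t * G.maxDegree + G.edgeSet.ncard) + G.maxDegree := by ring
      _ ≤ (F.deleteEdges (F.incidenceSet v)).edgeSet.ncard + F.degree v :=
          Nat.add_le_add hIH hdeg
      _ = F.edgeSet.ncard := by rw [← hcard]; exact hsplit

end Aux2

section Aux3
variable {V W : Type*}

private def copiesGraph (t m : ℕ) : SimpleGraph (Fin t × Fin m) where
  Adj x y := x.1 = y.1 ∧ x.2 ≠ y.2
  symm := ⟨fun _ _ h => ⟨h.1.symm, h.2.symm⟩⟩
  loopless := ⟨fun _ h => h.2 rfl⟩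

private lemma arrows_copies [Fintype V] (G : SimpleGraph V) (t : ℕ) :
    Arrows (copiesGraph t (Fintype.card V)) (MatchingGraph t) G := by
  classical
  intro R hR
  by_cases hred : ∀ a : Fin t,
      ∃ p : Fin (Fintype.card V) × Fin (Fintype.card V), R.Adj (a, p.1) (a, p.2)
  · left
    choose sel hsel using hred
    have hne : ∀ a : Fin t, (sel a).1 ≠ (sel a).2 := fun a he =>
      (hR (hsel a) : _ ∧ _).2 (by rw [he])
    refine ⟨⟨fun p => (p.1, if p.2 = 0 then (sel p.1).1 else (sel p.1).2), ?_⟩, ?_⟩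
    · rintro ⟨a, k⟩ ⟨b, l⟩ (⟨h1, h2⟩ : _ ∧ _)
      dsimp only at h1 h2 ⊢
      subst h1
      fin_cases k <;> fin_cases l <;> simp_all
      exact (hsel a).symm
    · rintro ⟨a, k⟩ ⟨b, l⟩ hab
      rw [Prod.mk.injEq] at hab
      obtain ⟨h1, h2⟩ := hab
      subst h1
      refine Prod.ext rfl ?_
      by_contra hkl
      fin_cases k <;> fin_cases l <;> simp_all
      · exact hne a h2.symm
  · right
    push_neg at hred
    obtain ⟨a, ha⟩ := hred
    refine ⟨⟨fun w => (a, Fintype.equivFin V w), ?_⟩, ?_⟩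
    · intro x y hxy
      refine ⟨by show _ ∧ _; exact ⟨rfl, fun he => G.ne_of_adj hxy ((Fintype.equivFin V).injective he)⟩, ?_⟩
      exact ha ((Fintype.equivFin V) x, (Fintype.equivFin V) y)
    · intro x y h
      rw [Prod.mk.injEq] at h
      exact (Fintype.equivFin V).injective h.2

private lemma arrows_of_iso {A B VG VH : Type*} {F : SimpleGraph A} {F' : SimpleGraph B}
    {G : SimpleGraph VG} {H : SimpleGraph VH} (e : F ≃g F') (h : Arrows F G H) :
    Arrows F' G H := by
  intro R' hR'
  have hle : R'.comap ⇑e ≤ F := fun x y hxy => e.map_adj_iff.mp (hR' hxy)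
  rcases h (R'.comap ⇑e) hle with ⟨f, hf⟩ | ⟨f, hf⟩
  · left
    exact ⟨(SimpleGraph.Hom.comap ⇑e R').comp f, e.toEquiv.injective.comp hf⟩
  · right
    refine ⟨SimpleGraph.Hom.comp ⟨⇑e, ?_⟩ f, e.toEquiv.injective.comp hf⟩
    rintro x y ⟨h1, h2⟩
    exact ⟨e.map_adj_iff.mpr h1, h2⟩

end Aux3


theorem stmt10 {V : Type*} [Fintype V] (G : SimpleGraph V) [DecidableRel G.Adj]
    (hG : G.edgeSet.Nonempty) (t : ℕ) (ht : 1 ≤ t) :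
    (t - 1) * G.maxDegree + G.edgeSet.ncard ≤ sizeRamsey (MatchingGraph t) G := by
  rw [sizeRamsey]
  obtain ⟨s, rfl⟩ : ∃ s, t = s + 1 := ⟨t - 1, by omega⟩
  have hwit : {m : ℕ | ∃ (n : ℕ) (F : SimpleGraph (Fin n)),
      Arrows F (MatchingGraph (s + 1)) G ∧ F.edgeSet.ncard = m}.Nonempty := by
    refine ⟨_, (s + 1) * Fintype.card V,
      (copiesGraph (s + 1) (Fintype.card V)).comap ⇑(finProdFinEquiv.symm), ?_, rfl⟩
    exact arrows_of_iso (SimpleGraph.Iso.comap finProdFinEquiv.symm _).symm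
      (arrows_copies G (s + 1))
  refine le_csInf hwit ?_
  rintro m ⟨n, F, hF, rfl⟩
  simpa using main_bound G hG s n F hF
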